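/- Let b ≥ 0 and (a, b)^T ∈ Z². Let ℓ ∈ ℕ be the minimal natural number satisfying ℓ ≡ a - b(b-1)/2 (mod 2) and -ℓ² ≤ a - b(b-1)/2 ≤ ℓ² + 2bℓ. Then the shortest representation of (a, b)^T in base M = [[1,1],[0,1]] over the digit set {(0,1)^T, (0,-1)^T} has length b + 2ℓ. -/

import Mathlib

/-!
A digit word is determined by the set `N` of positions carrying `(0,-1)ᵀ`. Since
`M ^ i = [[1, i], [0, 1]]`, the word of length `k` represents `(∑_{i<k} i - 2 ∑_{i∈N} i, k - 2|N|)`.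
So `(a, b)` has a representation of length `k` iff `k = b + 2n` and `a = k(k-1)/2 - 2S`, where `S`
is the sum of some `n`-element subset of `{0, …, k-1}`. These subset sums are exactly the integers
between the sum of the `n` smallest and of the `n` largest elements, and in terms of
`c = a - b(b-1)/2 = 2bn + 2n² - n - 2S` this becomes `c ≡ n (mod 2)` and `-n² ≤ c ≤ n² + 2bn`.
Hence the representation lengths are the numbers `b + 2n` with `n` in the set whose least element
is `ℓ`.
-/

/-- The Jordan block `[[1,1],[0,1]]`. -/
def M1 : Matrix (Fin 2) (Fin 2) ℤ := !![1, 1; 0, 1]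

/-- The digit `p = (0,1)ᵀ`. -/
def pd : Fin 2 → ℤ := ![0, 1]

/-- The digit `m = (0,-1)ᵀ`. -/
def md : Fin 2 → ℤ := ![0, -1]

/-- The vector represented by the word `d_{k-1} … d_0`, namely `∑ M^i d_i`. -/
def val1 {k : ℕ} (d : Fin k → (Fin 2 → ℤ)) : Fin 2 → ℤ :=
  ∑ i : Fin k, (M1 ^ (i : ℕ)).mulVec (d i)

open Finset Matrix

lemma sum_range_intCast_mul_two (n : ℕ) : (∑ j ∈ range n, (j : ℤ)) * 2 = n * (n - 1) := by
  induction n with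
  | zero => simp
  | succ n ih => rw [sum_range_succ]; push_cast; linarith

lemma exists_finset_card_sum_eq {k n : ℕ} {S : ℤ} (hn : n ≤ k)
    (hlo : ∑ j ∈ range n, (j : ℤ) ≤ S) (hhi : S + ∑ j ∈ range n, (j : ℤ) ≤ n * (k - 1)) :
    ∃ N : Finset (Fin k), #N = n ∧ ∑ i ∈ N, (i : ℤ) = S := by
  induction k generalizing n S with
  | zero =>
    obtain rfl : n = 0 := by omega
    exact ⟨∅, rfl, by simp at hlo hhi ⊢; omega⟩
  | succ k ih =>
    rcases n with _ | m
    · exact ⟨∅, rfl, by simp at hlo hhi ⊢; omega⟩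
    have hGm := sum_range_intCast_mul_two m
    rw [sum_range_succ] at hlo hhi
    push_cast at hhi
    by_cases hlast : ∑ j ∈ range m, (j : ℤ) ≤ S - k
    · obtain ⟨N, hcard, hsum⟩ := ih (n := m) (S := S - k) (by omega) hlast (by linarith)
      refine ⟨cons (Fin.last k) (N.map Fin.castSuccEmb) (by simp), by simp [hcard], ?_⟩
      simp [sum_map, hsum]
    · have hmk : m + 1 ≤ k := by
        by_contra
        obtain rfl : m = k := by omega
        exact hlast (by linarith)
      have hgap : 0 ≤ (m : ℤ) * (k - m - 1) := mul_nonneg (by positivity) (by omega)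
      obtain ⟨N, hcard, hsum⟩ := ih (n := m + 1) (S := S) hmk (by rw [sum_range_succ]; linarith)
        (by rw [sum_range_succ]; push_cast; linarith)
      exact ⟨N.map Fin.castSuccEmb, by simp [hcard], by simp [sum_map, hsum]⟩

theorem exists_finset_card_sum_eq_iff {k n : ℕ} {S : ℤ} :
    (∃ N : Finset (Fin k), #N = n ∧ ∑ i ∈ N, (i : ℤ) = S) ↔
      n ≤ k ∧ ∑ j ∈ range n, (j : ℤ) ≤ S ∧ S + ∑ j ∈ range n, (j : ℤ) ≤ n * (k - 1) := by
  refine ⟨?_, fun ⟨hn, hlo, hhi⟩ => exists_finset_card_sum_eq hn hlo hhi⟩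
  rintro ⟨N, rfl, rfl⟩
  set s := N.map ⟨fun i : Fin k => (i : ℤ), fun i j h => Fin.ext (by simpa using h)⟩
  have hcard : #s = #N := card_map _
  have hsum : ∑ x ∈ s, x = ∑ i ∈ N, (i : ℤ) := sum_map _ _ _
  have hmem : ∀ x ∈ s, 0 ≤ x ∧ x ≤ k - 1 := by
    simp only [s, mem_map]
    rintro _ ⟨i, -, rfl⟩
    have := i.isLt
    exact ⟨Int.natCast_nonneg _, by change ((i : ℕ) : ℤ) ≤ k - 1; omega⟩
  have hlo := sum_range_le_sum fun x hx => (hmem x hx).1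
  have hhi := sum_le_sum_range fun x hx => (hmem x hx).2
  rw [hcard, hsum] at hlo hhi
  simp only [zero_add, sum_sub_distrib, sum_const, card_range, nsmul_eq_mul] at hlo hhi
  exact ⟨(card_le_univ N).trans_eq (Fintype.card_fin k), hlo, by linarith⟩

lemma M1_pow (i : ℕ) : M1 ^ i = !![1, (i : ℤ); 0, 1] := by
  induction i with
  | zero => simp [one_fin_two]
  | succ i ih => rw [pow_succ, ih, M1, mul_fin_two]; push_cast; ring_nf

lemma M1_pow_mulVec (i : ℕ) (c : ℤ) : M1 ^ i *ᵥ ![0, c] = ![i * c, c] := by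
  ext j
  fin_cases j <;> simp [M1_pow, mulVec, dotProduct, Fin.sum_univ_two]

def signWord {k : ℕ} (N : Finset (Fin k)) : Fin k → Fin 2 → ℤ :=
  fun i => if i ∈ N then md else pd

lemma val1_signWord {k : ℕ} (N : Finset (Fin k)) :
    val1 (signWord N) = ![∑ i : Fin k, (i : ℤ) - 2 * ∑ i ∈ N, (i : ℤ), k - 2 * #N] := by
  have hword : ∀ i, signWord N i = ![0, 1 - 2 * if i ∈ N then 1 else 0] := by
    intro i; unfold signWord; split_ifs <;> simp [pd, md]
  simp only [val1, hword, M1_pow_mulVec]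
  ext j
  fin_cases j <;> simp [Finset.sum_apply, mul_sub, sum_sub_distrib, mul_sum, mul_comm]

lemma exists_digits_iff_exists_signWord {k : ℕ} {v : Fin 2 → ℤ} :
    (∃ d : Fin k → Fin 2 → ℤ, (∀ i, d i = pd ∨ d i = md) ∧ val1 d = v) ↔
      ∃ N : Finset (Fin k), val1 (signWord N) = v := by
  refine ⟨fun ⟨d, hd, hv⟩ => ⟨({i | d i = md} : Finset (Fin k)), ?_⟩,
    fun ⟨N, hv⟩ => ⟨signWord N, ?_, hv⟩⟩
  · convert hv using 2
    ext i : 1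
    have hpm : pd ≠ md := by simp [pd, md, funext_iff]
    rcases hd i with h | h <;> simp [signWord, h, hpm]
  · intro i; unfold signWord; split_ifs <;> simp

theorem exists_val1_signWord_eq_iff {k b : ℕ} {a : ℤ} :
    (∃ N : Finset (Fin k), val1 (signWord N) = ![a, (b : ℤ)]) ↔
      ∃ n : ℕ, b + 2 * n = k ∧ (a - b * (b - 1) / 2) % 2 = (n : ℤ) % 2 ∧
        -(n : ℤ) ^ 2 ≤ a - b * (b - 1) / 2 ∧ a - b * (b - 1) / 2 ≤ (n : ℤ) ^ 2 + 2 * b * n := by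
  have hbb : 2 * ((b : ℤ) * (b - 1) / 2) = b * (b - 1) :=
    Int.two_mul_ediv_two_of_even (Int.even_mul_pred_self _)
  simp only [val1_signWord, funext_iff, Fin.forall_fin_two, cons_val_zero, cons_val_one,
    Fin.sum_univ_eq_sum_range (fun j => (j : ℤ))]
  set c := a - b * (b - 1) / 2
  have ha_iff (n : ℕ) (S : ℤ) (hk : b + 2 * n = k) :
      ∑ i ∈ range k, (i : ℤ) - 2 * S = a ↔ c = 2 * b * n + 2 * n ^ 2 - n - 2 * S := by
    subst hk
    have hG := sum_range_intCast_mul_two (b + 2 * n)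
    push_cast at hG
    constructor <;> intro h <;> linarith
  constructor
  · rintro ⟨N, ha, hb⟩
    have hk : b + 2 * #N = k := by omega
    obtain ⟨-, hlo, hhi⟩ := exists_finset_card_sum_eq_iff.mp ⟨N, rfl, rfl⟩
    have hc := (ha_iff _ _ hk).mp ha
    have hGn := sum_range_intCast_mul_two #N
    rw [show (k : ℤ) = b + 2 * #N by omega] at hhi
    have hpar : c + #N = 2 * (b * #N + #N ^ 2 - ∑ i ∈ N, (i : ℤ)) := by linarith
    exact ⟨#N, hk, by omega, by linarith, by linarith⟩
  · rintro ⟨n, rfl, hpar, hlo, hhi⟩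
    obtain ⟨u, hu⟩ : ∃ u, c + n = 2 * u := ⟨(c + n) / 2, by omega⟩
    have hGn := sum_range_intCast_mul_two n
    obtain ⟨N, hN, hS⟩ := (exists_finset_card_sum_eq_iff (k := b + 2 * n) (n := n)
      (S := b * n + n ^ 2 - u)).mpr ⟨by omega, by linarith, by push_cast; linarith⟩
    exact ⟨N, by rw [hS, ha_iff n _ rfl]; linarith, by push_cast; rw [hN]; ring⟩

theorem stmt7 (b : ℕ) (a : ℤ) (ℓ : ℕ)
    (hℓ : IsLeast {l : ℕ |
        (a - (b : ℤ) * ((b : ℤ) - 1) / 2) % 2 = (l : ℤ) % 2 ∧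
        -(l : ℤ) ^ 2 ≤ a - (b : ℤ) * ((b : ℤ) - 1) / 2 ∧
        a - (b : ℤ) * ((b : ℤ) - 1) / 2 ≤ (l : ℤ) ^ 2 + 2 * (b : ℤ) * (l : ℤ)} ℓ) :
    IsLeast {k : ℕ | ∃ d : Fin k → (Fin 2 → ℤ),
        (∀ i, d i = pd ∨ d i = md) ∧ val1 d = ![a, (b : ℤ)]} (b + 2 * ℓ) := by
  have hmono : Monotone fun n => b + 2 * n := fun m n h => by dsimp only; omega
  refine (congrArg (IsLeast · (b + 2 * ℓ)) (Set.ext fun k => ?_)).mpr (hmono.map_isLeast hℓ)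
  rw [Set.mem_ofPred_eq, exists_digits_iff_exists_signWord, exists_val1_signWord_eq_iff]
  exact exists_congr fun n => and_comm
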